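/- arXiv:1204.3422 — 2 statements merged into one kernel-verified Lean document; each statement's English description precedes it below -/
import Mathlib

section
/- For every arbitrage rule ω = (i,j,k) with 1 < k < i < j, the matrix B_ω = I - e_{ij}(e_{ij}^T + e_{ki}^T - e_{kj}^T) commutes with the change of basis in the sense that Q^{-1} B_ω Q = B_ω, where Q = I + Σ_{2 ≤ m < n ≤ d} e_{mn}(e_{1n}^T - e_{1m}^T). -/
open Matrix

/-- Index type for the coordinates of `ℝ^{d(d-1)/2}`: pairs `(i,j)` with `i < j`. -/
abbrev Pr (d : ℕ) := {p : Fin d × Fin d // p.1 < p.2}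

/-- The pair `(i,j)` with `i < j` as an element of `Pr d`. -/
def pr {d : ℕ} {i j : Fin d} (h : i < j) : Pr d := ⟨(i, j), h⟩

/-- `Eb p q = e_p e_q^T`, the matrix with a single `1` in position `(p,q)`. -/
noncomputable def Eb {d : ℕ} (p q : Pr d) : Matrix (Pr d) (Pr d) ℝ :=
  Matrix.single p q 1

/-- The matrix `B_ω` for the arbitrage rule `ω = (i,j,k)`, `i < j`, `k ≠ i,j`. -/
noncomputable def Bmat {d : ℕ} (i j k : Fin d) (hij : i < j) (hki : k ≠ i) (hkj : k ≠ j) :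
    Matrix (Pr d) (Pr d) ℝ :=
  if h1 : k < i then
    -- case k < i < j : B = I - e_{ij}(e_{ij}^T + e_{ki}^T - e_{kj}^T)
    1 - Eb (pr hij) (pr hij) - Eb (pr hij) (pr h1) + Eb (pr hij) (pr (h1.trans hij))
  else if h2 : k < j then
    -- case i < k < j : B = I - e_{ij}(e_{ij}^T - e_{ik}^T - e_{kj}^T)
    1 - Eb (pr hij) (pr hij) + Eb (pr hij) (pr (lt_of_le_of_ne (not_lt.1 h1) (Ne.symm hki)))
      + Eb (pr hij) (pr h2)
  else
    -- case i < j < k : B = I - e_{ij}(e_{ij}^T - e_{ik}^T + e_{jk}^T)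
    1 - Eb (pr hij) (pr hij)
      + Eb (pr hij) (pr (hij.trans (lt_of_le_of_ne (not_lt.1 h2) (Ne.symm hkj))))
      - Eb (pr hij) (pr (lt_of_le_of_ne (not_lt.1 h2) (Ne.symm hkj)))

/-- `Q = I + Σ_{2 ≤ i < j ≤ d} e_{ij}(e_{1j}^T - e_{1i}^T)`. -/
noncomputable def Qmat (d : ℕ) [NeZero d] : Matrix (Pr d) (Pr d) ℝ :=
  1 + ∑ p : Pr d,
    if h : (0 : Fin d) < p.1.1 then Eb p (pr (h.trans p.2)) - Eb p (pr h) else 0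

/-- `Q⁻¹ = I - Σ_{2 ≤ i < j ≤ d} e_{ij}(e_{1j}^T - e_{1i}^T)`. -/
noncomputable def Qinv (d : ℕ) [NeZero d] : Matrix (Pr d) (Pr d) ℝ :=
  1 - ∑ p : Pr d,
    if h : (0 : Fin d) < p.1.1 then Eb p (pr (h.trans p.2)) - Eb p (pr h) else 0

/-
Write `Q = 1 + S` and `Q⁻¹ = 1 - S` (indices as in the paper; its `1` is `0 : Fin d`). Every
column of `S` is indexed by a pair `(1, m)`, while every row of `B_ω - 1` is indexed by `(i, j)`
with `i > 1`; hence `S (B_ω - 1) = 0` and `S² = 0`.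
On the other side `(B_ω - 1) S = -e_{ij} (e_{ij}^T + e_{ki}^T - e_{kj}^T) S` vanishes, since
`(e_{ij}^T + e_{ki}^T - e_{kj}^T) S = (e_{1j} - e_{1i}) + (e_{1i} - e_{1k}) - (e_{1j} - e_{1k})`
telescopes to zero; this is where `k > 1` enters. So `S B_ω = B_ω S = S`, and then
`(1 - S) B_ω (1 + S) = B_ω + B_ω S - S B_ω - S B_ω S = B_ω`.
-/

theorem one_sub_mul_mul_one_add_eq {R : Type*} [Ring R] {s b : R} (hss : s * s = 0)
    (hsb : s * b = s) (hbs : b * s = s) : (1 - s) * b * (1 + s) = b := by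
  rw [sub_mul, one_mul, hsb, mul_add, mul_one, sub_mul, hbs, hss]
  abel

noncomputable def Smat (d : ℕ) [NeZero d] : Matrix (Pr d) (Pr d) ℝ :=
  ∑ p : Pr d,
    if h : (0 : Fin d) < p.1.1 then Eb p (pr (h.trans p.2)) - Eb p (pr h) else 0

theorem Qmat_eq_one_add_Smat (d : ℕ) [NeZero d] : Qmat d = 1 + Smat d := rfl

theorem Qinv_eq_one_sub_Smat (d : ℕ) [NeZero d] : Qinv d = 1 - Smat d := rfl

theorem Eb_mul_Eb {d : ℕ} (p q r s : Pr d) :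
    Eb p q * Eb r s = if q = r then Eb p s else 0 := by
  split_ifs with hqr
  · subst hqr
    rw [Eb, Eb, Eb, single_mul_single_same, one_mul]
  · exact single_mul_single_of_ne (c := (1 : ℝ)) p q r (h := hqr) 1

theorem Smat_mul_Eb_of_ne_zero {d : ℕ} [NeZero d] {p : Pr d} (hp : p.1.1 ≠ 0) (q : Pr d) :
    Smat d * Eb p q = 0 := by
  rw [Smat, Finset.sum_mul]
  refine Finset.sum_eq_zero fun r _ => ?_
  split_ifs with hr
  · have hne : ∀ {b : Fin d} (h : 0 < b), pr h ≠ p :=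
      fun _ he => hp (congrArg (·.1.1) he).symm
    rw [sub_mul, Eb_mul_Eb, Eb_mul_Eb, if_neg (hne _), if_neg (hne hr), sub_zero]
  · exact zero_mul _

theorem Eb_mul_Smat {d : ℕ} [NeZero d] (p q : Pr d) :
    Eb p q * Smat d =
      if h : (0 : Fin d) < q.1.1 then Eb p (pr (h.trans q.2)) - Eb p (pr h) else 0 := by
  rw [Smat, Finset.mul_sum, Finset.sum_eq_single q]
  · split_ifs <;> simp only [mul_sub, mul_zero, Eb_mul_Eb, ↓reduceIte]
  · intro r _ hrq
    split_ifs <;> simp only [mul_sub, mul_zero, Eb_mul_Eb, if_neg (Ne.symm hrq), sub_zero]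
  · exact fun hq => (hq (Finset.mem_univ q)).elim

theorem Eb_mul_Smat_pr_of_pos {d : ℕ} [NeZero d] (p : Pr d) {a b : Fin d} (ha : 0 < a)
    (hab : a < b) : Eb p (pr hab) * Smat d = Eb p (pr (ha.trans hab)) - Eb p (pr ha) := by
  rw [Eb_mul_Smat]
  exact dif_pos ha

theorem Eb_mul_Smat_pr_zero {d : ℕ} [NeZero d] (p : Pr d) {b : Fin d} (hb : 0 < b) :
    Eb p (pr hb) * Smat d = 0 := by
  rw [Eb_mul_Smat]
  exact dif_neg (lt_irrefl 0)

theorem Smat_mul_self (d : ℕ) [NeZero d] : Smat d * Smat d = 0 := by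
  nth_rw 1 [Smat]
  rw [Finset.sum_mul]
  refine Finset.sum_eq_zero fun r _ => ?_
  split_ifs
  · rw [sub_mul, Eb_mul_Smat_pr_zero, Eb_mul_Smat_pr_zero, sub_zero]
  · exact zero_mul _

section
variable {d : ℕ} {k i j : Fin d} (hki : k < i) (hij : i < j)

theorem Bmat_of_lt :
    Bmat i j k hij hki.ne (hki.trans hij).ne =
      1 - Eb (pr hij) (pr hij) - Eb (pr hij) (pr hki) + Eb (pr hij) (pr (hki.trans hij)) := by
  rw [Bmat, dif_pos hki]

variable [NeZero d]

theorem Smat_mul_Bmat_of_lt :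
    Smat d * Bmat i j k hij hki.ne (hki.trans hij).ne = Smat d := by
  have hS : ∀ q, Smat d * Eb (pr hij) q = 0 :=
    Smat_mul_Eb_of_ne_zero ((Fin.zero_le k).trans_lt hki).ne'
  rw [Bmat_of_lt hki hij, mul_add, mul_sub, mul_sub, mul_one, hS, hS, hS, sub_zero, sub_zero,
    add_zero]

theorem Bmat_mul_Smat_of_lt (h0k : (0 : Fin d) < k) :
    Bmat i j k hij hki.ne (hki.trans hij).ne * Smat d = Smat d := by
  rw [Bmat_of_lt hki hij, add_mul, sub_mul, sub_mul, one_mul,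
    Eb_mul_Smat_pr_of_pos _ (h0k.trans hki), Eb_mul_Smat_pr_of_pos _ h0k,
    Eb_mul_Smat_pr_of_pos _ h0k]
  abel

end

theorem conj_case_one_lt_k_general (d : ℕ) [NeZero d]
    (k i j : Fin d) (h0k : (0 : Fin d) < k) (hki : k < i) (hij : i < j) :
    Qinv d * Bmat i j k hij hki.ne (hki.trans hij).ne * Qmat d
      = Bmat i j k hij hki.ne (hki.trans hij).ne := by
  rw [Qinv_eq_one_sub_Smat, Qmat_eq_one_add_Smat]
  exact one_sub_mul_mul_one_add_eq (Smat_mul_self d)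
    (Smat_mul_Bmat_of_lt hki hij) (Bmat_mul_Smat_of_lt hki hij h0k)

theorem conj_case_one_lt_k (d : ℕ) [NeZero d] (hd : 4 ≤ d)
    (k i j : Fin d) (h0k : (0 : Fin d) < k) (hki : k < i) (hij : i < j) :
    Qinv d * Bmat i j k hij hki.ne (hki.trans hij).ne * Qmat d
      = Bmat i j k hij hki.ne (hki.trans hij).ne :=
  conj_case_one_lt_k_general d k i j h0k hki hij
end

section
/- For every arbitrage rule ω, the conjugated matrix D_ω = Q^{-1} B_ω Q is block upper-triangular with respect to the decomposition of ℝ^{d(d-1)/2} into the span of {e_{1j} : 2 ≤ j ≤ d} and the span of {e_{ij} : 2 ≤ i < j ≤ d}: that is, for all 2 ≤ i < j ≤ d and 2 ≤ n ≤ d, the (ij, 1n)-entry of D_ω vanishes, and moreover D_ω e_{1n} = e_{1n} for all 2 ≤ n ≤ d. -/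
open Matrix

/-!
Write `Q = 1 + S` and `Q⁻¹ = 1 - S`. `S` maps into the span of the `e_{ij}` with `i ≥ 2` and kills
that span, so `S² = 0` and `Q⁻¹` is indeed the inverse of `Q`. The column `Q e_{1n}` is the
arbitrage-free vector `x_{ab} = φ b - φ a` of the potential `φ = δ_n`, and every `B_ω` fixes
arbitrage-free vectors, because it only corrects the `ij`-coordinate by the amount
`x_{ij} - x_{ik} - x_{kj}` (up to orientation) of arbitrage around the triangle `i, j, k`.
Hence `Q⁻¹ B_ω Q e_{1n} = e_{1n}`, which also gives the vanishing entries of those columns.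
-/

/-- The arbitrage-free vector `x_{ab} = φ b - φ a` of the potential `φ`. -/
def coboundary {d : ℕ} (φ : Fin d → ℝ) : Pr d → ℝ := fun p => φ p.1.2 - φ p.1.1

section

variable {d : ℕ}

@[simp]
lemma coboundary_pr (φ : Fin d → ℝ) {a b : Fin d} (h : a < b) : coboundary φ (pr h) = φ b - φ a :=
  rfl

lemma Eb_mulVec (p q : Pr d) (v : Pr d → ℝ) : Eb p q *ᵥ v = Pi.single p (v q) := by
  rw [Eb, single_mulVec_eq, one_mul, ← Pi.single_smul, smul_eq_mul, mul_one]

lemma Bmat_mulVec_coboundary (i j k : Fin d) (hij : i < j) (hki : k ≠ i) (hkj : k ≠ j)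
    (φ : Fin d → ℝ) : Bmat i j k hij hki hkj *ᵥ coboundary φ = coboundary φ := by
  unfold Bmat
  split_ifs <;>
  · ext r
    simp only [add_mulVec, sub_mulVec, one_mulVec, Eb_mulVec, coboundary_pr, Pi.add_apply,
      Pi.sub_apply]
    rcases eq_or_ne r (pr hij) with rfl | hr
    · simp only [Pi.single_eq_same, coboundary_pr]; ring
    · simp only [Pi.single_eq_of_ne hr]; ring

end

section

variable (d : ℕ) [NeZero d]

/-- `Q = 1 + Qnil d` and `Q⁻¹ = 1 - Qnil d`. -/
noncomputable def Qnil : Matrix (Pr d) (Pr d) ℝ :=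
  ∑ p : Pr d, if h : (0 : Fin d) < p.1.1 then Eb p (pr (h.trans p.2)) - Eb p (pr h) else 0

variable {d}

lemma Qnil_apply (r q : Pr d) :
    Qnil d r q = if 0 < r.1.1 ∧ q.1.1 = 0 then coboundary (Pi.single q.1.2 1) r else 0 := by
  rw [Qnil, Matrix.sum_apply, Finset.sum_eq_single r]
  · split_ifs <;>
      simp_all [Eb, single_apply, coboundary, pr, Subtype.ext_iff, Prod.ext_iff, Pi.single_apply,
        eq_comm (a := (0 : Fin d))]
  · intro p _ hp
    split_ifs <;> simp [Eb, hp]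
  · simp

lemma Qnil_mul_self : Qnil d * Qnil d = 0 := by
  ext r q
  rw [Matrix.mul_apply, Matrix.zero_apply]
  refine Finset.sum_eq_zero fun s _ => ?_
  rw [Qnil_apply, Qnil_apply]
  split_ifs with hrs hsq <;> simp_all

lemma Qinv_mul_Qmat : Qinv d * Qmat d = 1 := by
  change (1 - Qnil d) * (1 + Qnil d) = 1
  rw [sub_mul, one_mul, mul_add, mul_one, Qnil_mul_self]
  abel

lemma Qmat_mulVec_single {q : Pr d} (hq : q.1.1 = 0) :
    Qmat d *ᵥ Pi.single q 1 = coboundary (Pi.single q.1.2 1) := by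
  ext r
  rw [mulVec_single_one, col_apply]
  change (1 + Qnil d) r q = _
  have hq2 : q.1.2 ≠ 0 := (hq ▸ q.2).ne'
  rw [Matrix.add_apply, one_apply, Qnil_apply]
  rcases (Fin.zero_le r.1.1).lt_or_eq with hr | hr
  · have hrq : r ≠ q := fun h => hr.ne' (h ▸ hq)
    simp [hr, hq, hrq]
  · have hrq : r = q ↔ r.1.2 = q.1.2 := by simp [Subtype.ext_iff, Prod.ext_iff, ← hr, hq]
    simp [coboundary, Pi.single_apply, ← hr, hrq, hq2.symm]

end

lemma conj_mulVec_single {d : ℕ} [NeZero d] (i j k : Fin d) (hij : i < j) (hki : k ≠ i)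
    (hkj : k ≠ j) {q : Pr d} (hq : q.1.1 = 0) :
    (Qinv d * Bmat i j k hij hki hkj * Qmat d) *ᵥ Pi.single q 1 = Pi.single q 1 :=
  calc _ = Qinv d *ᵥ (Bmat i j k hij hki hkj *ᵥ (Qmat d *ᵥ Pi.single q 1)) := by
        simp only [mulVec_mulVec, Matrix.mul_assoc]
    _ = Qinv d *ᵥ (Qmat d *ᵥ Pi.single q 1) := by
        rw [Qmat_mulVec_single hq, Bmat_mulVec_coboundary]
    _ = Pi.single q 1 := by rw [mulVec_mulVec, Qinv_mul_Qmat, one_mulVec]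

theorem conj_block_triangular_general (d : ℕ) [NeZero d]
    (i j k : Fin d) (hij : i < j) (hki : k ≠ i) (hkj : k ≠ j) :
    (∀ p q : Pr d, (0 : Fin d) < p.1.1 → q.1.1 = 0 →
        (Qinv d * Bmat i j k hij hki hkj * Qmat d) p q = 0)
    ∧ ∀ (n : Fin d) (h0n : (0 : Fin d) < n),
        (Qinv d * Bmat i j k hij hki hkj * Qmat d).mulVec (Pi.single (pr h0n) 1)
          = Pi.single (pr h0n) 1 := by
  refine ⟨fun p q hp hq => ?_, fun n h0n => conj_mulVec_single i j k hij hki hkj rfl⟩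
  have hpq : p ≠ q := fun h => hp.ne' (h ▸ hq)
  have hcol := congrFun (conj_mulVec_single i j k hij hki hkj hq) p
  rwa [mulVec_single_one, col_apply, Pi.single_eq_of_ne hpq] at hcol

theorem conj_block_triangular (d : ℕ) [NeZero d] (hd : 3 ≤ d)
    (i j k : Fin d) (hij : i < j) (hki : k ≠ i) (hkj : k ≠ j) :
    (∀ p q : Pr d, (0 : Fin d) < p.1.1 → q.1.1 = 0 →
        (Qinv d * Bmat i j k hij hki hkj * Qmat d) p q = 0)
    ∧ ∀ (n : Fin d) (h0n : (0 : Fin d) < n),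
        (Qinv d * Bmat i j k hij hki hkj * Qmat d).mulVec (Pi.single (pr h0n) 1)
          = Pi.single (pr h0n) 1 :=
  conj_block_triangular_general d i j k hij hki hkj
end
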